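/- Let α₁,...,α_p ∈ [0,1) with each α_k (for 2 ≤ k ≤ p) satisfying α_k ≥ max_{i=1,...,⌊k/2⌋} α_i·α_{k-i}. Then for every k with 2 ≤ k ≤ p and every tuple (a₁,...,a_{k-1}) of nonnegative integers with ∑_{i=1}^{k-1} i·a_i = k, one has ∏_{i=1}^{k-1} α_i^{a_i} ≤ α_k (where 0^0 = 1 and factors with α_i = 0 and a_i > 0 make the product 0). -/
import Mathlib


/-- Proposition 1 (identifiability): if `α_k ≥ max_{i ≤ ⌊k/2⌋} α_i α_{k-i}` for
all `2 ≤ k ≤ p`, then every multiplicative decomposition `∏_{i=1}^{k-1} α_i^{a_i}`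
with `∑ i·a_i = k` is bounded above by `α_k`. -/
theorem maxarma_identifiability (p : ℕ) (α : ℕ → ℝ)
    (hα : ∀ i ∈ Finset.Icc 1 p, 0 ≤ α i ∧ α i < 1)
    (hpair : ∀ k, 2 ≤ k → k ≤ p → ∀ i ∈ Finset.Icc 1 (k / 2), α i * α (k - i) ≤ α k) :
    ∀ k, 2 ≤ k → k ≤ p → ∀ a : ℕ → ℕ,
      (∑ i ∈ Finset.Icc 1 (k - 1), i * a i) = k →
      (∏ i ∈ Finset.Icc 1 (k - 1), α i ^ a i) ≤ α k := by
  intro k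
  induction k using Nat.strong_induction_on with
  | _ k IH =>
  intro hk2 hkp a hsum
  set s : Finset ℕ := Finset.Icc 1 (k - 1) with hs
  -- the support of a within s
  set S : Finset ℕ := s.filter (fun i => a i ≠ 0) with hS
  have hsumS : ∑ i ∈ S, i * a i = k := by
    rw [← hsum]
    apply Finset.sum_filter_of_ne
    intro i _ h
    intro hai; rw [hai] at h; simp at h
  have hSne : S.Nonempty := by
    by_contra h
    rw [Finset.not_nonempty_iff_eq_empty] at h
    rw [h] at hsumS
    simp at hsumS
    omega
  set j : ℕ := S.min' hSne with hj
  have hjS : j ∈ S := Finset.min'_mem _ _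
  have hjs : j ∈ s := (Finset.mem_filter.mp hjS).1
  have haj : a j ≠ 0 := (Finset.mem_filter.mp hjS).2
  have hj1 : 1 ≤ j := (Finset.mem_Icc.mp hjs).1
  have hjk1 : j ≤ k - 1 := (Finset.mem_Icc.mp hjs).2
  -- sum of a over S is at least 2
  have hsa2 : 2 ≤ ∑ i ∈ S, a i := by
    by_contra h
    push_neg at h
    have hb : ∑ i ∈ S, i * a i ≤ ∑ i ∈ S, (k - 1) * a i := by
      apply Finset.sum_le_sum
      intro i hi
      have : i ≤ k - 1 := (Finset.mem_Icc.mp (Finset.mem_filter.mp hi).1).2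
      exact Nat.mul_le_mul_right _ this
    rw [← Finset.mul_sum] at hb
    have : (k - 1) * (∑ i ∈ S, a i) ≤ (k - 1) * 1 := by
      apply Nat.mul_le_mul_left
      omega
    omega
  -- 2 * j ≤ k
  have h2j : 2 * j ≤ k := by
    have hb : ∑ i ∈ S, j * a i ≤ ∑ i ∈ S, i * a i := by
      apply Finset.sum_le_sum
      intro i hi
      exact Nat.mul_le_mul_right _ (Finset.min'_le _ _ hi)
    rw [← Finset.mul_sum, hsumS] at hb
    calc 2 * j = j * 2 := by ring
    _ ≤ j * ∑ i ∈ S, a i := Nat.mul_le_mul_left _ hsa2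
    _ ≤ k := hb
  have hjhalf : j ∈ Finset.Icc 1 (k / 2) := by
    rw [Finset.mem_Icc]
    constructor
    · exact hj1
    · omega
  have hjp : j ∈ Finset.Icc 1 p := by rw [Finset.mem_Icc]; omega
  have hαj0 : 0 ≤ α j := (hα j hjp).1
  set m : ℕ := k - j with hm
  have hm1 : 1 ≤ m := by omega
  have hmp : m ∈ Finset.Icc 1 p := by rw [Finset.mem_Icc]; omega
  have hαm0 : 0 ≤ α m := (hα m hmp).1
  rcases Nat.lt_or_ge m 2 with hmlt | hm2
  · -- m = 1, so j = k - 1, and 2j ≤ k forces k = 2, j = 1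
    have hk2' : k = 2 := by omega
    have hj1' : j = 1 := by omega
    subst hk2'
    have ha1 : a 1 = 2 := by
      have : s = {1} := by rw [hs]; rfl
      rw [this] at hsum
      simpa using hsum
    have : s = {1} := by rw [hs]; rfl
    rw [this, Finset.prod_singleton, ha1]
    have := hpair 2 (by norm_num) hkp 1 (by norm_num)
    norm_num at this
    calc α 1 ^ 2 = α 1 * α 1 := sq (α 1)
    _ ≤ α 2 := this
  · -- main case: m ≥ 2
    set a' : ℕ → ℕ := Function.update a j (a j - 1) with ha'
    have ha'j : a' j = a j - 1 := Function.update_self _ _ _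
    have ha'ne : ∀ i, i ≠ j → a' i = a i := fun i hi => Function.update_of_ne hi _ _
    -- sum of new decomposition
    have hsum' : ∑ i ∈ s, i * a' i = m := by
      have key : (fun i => i * a' i) = Function.update (fun i => i * a i) j (j * (a j - 1)) := by
        funext i
        by_cases hi : i = j
        · subst hi; rw [ha'j, Function.update_self]
        · rw [ha'ne i hi, Function.update_of_ne hi]
      rw [key, Finset.sum_update_of_mem hjs]
      have horig : ∑ i ∈ s, i * a i = j * a j + ∑ i ∈ s \ {j}, i * a i := by
        rw [Finset.sum_eq_add_sum_sdiff_singleton_of_mem hjs]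
      rw [horig] at hsum
      have hrw : j * (a j - 1) = j * a j - j := by
        cases' Nat.exists_eq_succ_of_ne_zero haj with n hn
        rw [hn]; simp [Nat.mul_succ]
      rw [hrw]
      have hle : j ≤ j * a j := Nat.le_mul_of_pos_right j (Nat.pos_of_ne_zero haj)
      omega
    -- product factorization
    have hprod : ∏ i ∈ s, α i ^ a i = α j * ∏ i ∈ s, α i ^ a' i := by
      have key : (fun i => α i ^ a' i) = Function.update (fun i => α i ^ a i) j (α j ^ (a j - 1)) := by
        funext i
        by_cases hi : i = j
        · subst hi; rw [ha'j, Function.update_self]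
        · rw [ha'ne i hi, Function.update_of_ne hi]
      rw [key, Finset.prod_update_of_mem hjs]
      rw [Finset.prod_eq_mul_prod_sdiff_singleton_of_mem hjs (fun i => α i ^ a i)]
      rw [← mul_assoc]
      congr 1
      rw [← pow_succ']
      congr 1
      omega
    -- each a' i = 0 for i > m (within s)
    have hterm : ∀ i ∈ s, i * a' i ≤ m := by
      intro i hi
      rw [← hsum']
      exact Finset.single_le_sum (f := fun i => i * a' i) (fun i _ => Nat.zero_le _) hi
    -- prod a' ≤ α m
    have hprod0 : 0 ≤ ∏ i ∈ s, α i ^ a' i := by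
      apply Finset.prod_nonneg
      intro i hi
      apply pow_nonneg
      exact (hα i (by rw [Finset.mem_Icc]; have := Finset.mem_Icc.mp hi; omega)).1
    have hkey : (∏ i ∈ s, α i ^ a' i) ≤ α m := by
      by_cases hm0 : a' m = 0
      · -- all indices ≥ m vanish; restrict to Icc 1 (m-1) and apply IH
        have hzero : ∀ i ∈ s, m ≤ i → a' i = 0 := by
          intro i hi hmi
          rcases Nat.eq_or_lt_of_le hmi with h | h
          · rw [← h]; exact hm0
          · have := hterm i hi
            by_contra hne
            have : i ≤ i * a' i := Nat.le_mul_of_pos_right _ (Nat.pos_of_ne_zero hne)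
            omega
        have hsub : Finset.Icc 1 (m - 1) ⊆ s := by
          apply Finset.Icc_subset_Icc_right
          omega
        have hsum'' : ∑ i ∈ Finset.Icc 1 (m - 1), i * a' i = m := by
          have heq : ∑ i ∈ Finset.Icc 1 (m - 1), i * a' i = ∑ i ∈ s, i * a' i := by
            apply Finset.sum_subset hsub
            intro i hi hni
            have him : m ≤ i := by
              have h1 := Finset.mem_Icc.mp hi
              by_contra h
              push_neg at h
              exact hni (Finset.mem_Icc.mpr ⟨h1.1, by omega⟩)
            rw [hzero i hi him, Nat.mul_zero]
          rw [heq, hsum']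
        have hprodeq : ∏ i ∈ s, α i ^ a' i = ∏ i ∈ Finset.Icc 1 (m - 1), α i ^ a' i := by
          symm
          apply Finset.prod_subset hsub
          intro i hi hni
          have him : m ≤ i := by
            have h1 := Finset.mem_Icc.mp hi
            by_contra h
            push_neg at h
            exact hni (Finset.mem_Icc.mpr ⟨h1.1, by omega⟩)
          rw [hzero i hi him, pow_zero]
        rw [hprodeq]
        exact IH m (by omega) hm2 (by omega) a' hsum''
      · -- a' m = 1 and everything else vanishes, product is α m
        have hms : m ∈ s := by rw [hs, Finset.mem_Icc]; omega
        have hm1' : a' m = 1 := by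
          have := hterm m hms
          have : a' m ≤ 1 := by
            by_contra h
            push_neg at h
            have : m * 2 ≤ m * a' m := Nat.mul_le_mul_left _ h
            omega
          omega
        have hrest : ∀ i ∈ s, i ≠ m → a' i = 0 := by
          intro i hi hne
          have hsplit : ∑ i ∈ s, i * a' i = m * a' m + ∑ i ∈ s \ {m}, i * a' i := by
            rw [Finset.sum_eq_add_sum_sdiff_singleton_of_mem hms]
          rw [hsum', hm1', Nat.mul_one] at hsplit
          have hrest0 : ∑ i ∈ s \ {m}, i * a' i = 0 := by omega
          have hi' : i ∈ s \ {m} := Finset.mem_sdiff.mpr ⟨hi, by simp [hne]⟩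
          have h0 := Finset.sum_eq_zero_iff.mp hrest0 i hi'
          have h2 := Nat.mul_eq_zero.mp h0
          have h1 := Finset.mem_Icc.mp hi
          omega
        have : ∏ i ∈ s, α i ^ a' i = α m ^ a' m := by
          apply Finset.prod_eq_single_of_mem m hms
          intro b hb hbne
          rw [hrest b hb hbne, pow_zero]
        rw [this, hm1', pow_one]
    -- conclude
    rw [hprod]
    calc α j * ∏ i ∈ s, α i ^ a' i ≤ α j * α m :=
          mul_le_mul_of_nonneg_left hkey hαj0
    _ = α j * α (k - j) := by rw [hm]
    _ ≤ α k := hpair k hk2 hkp j hjhalf
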